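/- Let 0 < ε < 1/4, and let X, Y be compact Hausdorff spaces with X having at least two points. Fix distinct points A, B ∈ X and a point y₀ ∈ Y where a continuous function α : Y → [0, 2√ε] attains the value 2√ε. Suppose T : C(X) → C(Y) is defined by (Tf)(y) := α(y)·(f(A) + f(B))/2 for all f and y (a simplified model of the construction). Then T is ε-disjointness preserving with ‖T‖ = 2√ε, and for every weighted composition map S (Sf = a·(f∘h) with a ∈ C(Y), h continuous on c(a)) one has ‖T − S‖ ≥ √ε. -/

import Mathlib

/-!
`T` multiplies the average of `f` over `{A, B}` by `α`, so `T 1 = α` and `‖T‖ = ‖α‖ = 2√ε`.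
If `f * g = 0`, then at each of `A`, `B` one of `f`, `g` vanishes, so
`(f A + f B) (g A + g B)` is a single product `f A * g B` or `f B * g A`, of modulus at most `1`;
hence `|(T f)(T g)| ≤ α² / 4 ≤ ε`. A weighted composition `S` reads `f` at the single point
`h y₀`: an Urysohn function vanishing there and equal to `1` at whichever of `A`, `B` differs
from `h y₀` has `(S f) y₀ = 0` but `(T f) y₀ ≥ α y₀ / 2 = √ε`.
-/

open Real

def IsWCM {X Y : Type*} [TopologicalSpace X] [CompactSpace X]
    [TopologicalSpace Y] [CompactSpace Y]
    (S : C(X, ℝ) →L[ℝ] C(Y, ℝ)) : Prop :=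
  ∃ (a : C(Y, ℝ)) (h : Y → X), ContinuousOn h {y | a y ≠ 0} ∧
    ∀ (f : C(X, ℝ)) (y : Y), S f y = a y * f (h y)

lemma abs_add_mul_add_le_one {a b c d : ℝ} (ha : |a| ≤ 1) (hb : |b| ≤ 1) (hc : |c| ≤ 1)
    (hd : |d| ≤ 1) (hac : a * c = 0) (hbd : b * d = 0) : |(a + b) * (c + d)| ≤ 1 := by
  have hexp : (a + b) * (c + d) = a * d + b * c := by linear_combination hac + hbd
  rw [hexp]
  rcases mul_eq_zero.1 hac with rfl | rfl
  · simpa [abs_mul] using mul_le_one₀ hb (abs_nonneg c) hc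
  · simpa [abs_mul] using mul_le_one₀ ha (abs_nonneg d) hd

lemma ContinuousMap.abs_apply_le_of_norm_le_one {X : Type*} [TopologicalSpace X]
    [CompactSpace X] {f : C(X, ℝ)} (hf : ‖f‖ ≤ 1) (x : X) : |f x| ≤ 1 :=
  (f.norm_coe_le_norm x).trans hf

lemma exists_continuousMap_zero_one_of_ne {X : Type*} [TopologicalSpace X] [NormalSpace X]
    [T1Space X] {x z : X} (hxz : x ≠ z) :
    ∃ f : C(X, ℝ), f x = 0 ∧ f z = 1 ∧ ∀ w, f w ∈ Set.Icc (0 : ℝ) 1 := by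
  obtain ⟨f, hf0, hf1, hf⟩ := exists_continuous_zero_one_of_isClosed isClosed_singleton
    isClosed_singleton (Set.disjoint_singleton.2 hxz)
  exact ⟨f, hf0 rfl, hf1 rfl, hf⟩

section Averaging

variable {X Y : Type*} [TopologicalSpace X] [CompactSpace X] [TopologicalSpace Y]
  [CompactSpace Y] {α : C(Y, ℝ)} {A B : X} {T : C(X, ℝ) →L[ℝ] C(Y, ℝ)}

lemma norm_mul_le_of_mul_eq_zero (hT : ∀ f y, T f y = α y * (f A + f B) / 2)
    {f g : C(X, ℝ)} (hf : ‖f‖ ≤ 1) (hg : ‖g‖ ≤ 1) (hfg : f * g = 0) :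
    ‖T f * T g‖ ≤ ‖α‖ ^ 2 / 4 := by
  refine (ContinuousMap.norm_le _ (by positivity)).2 fun y => ?_
  have hA : f A * g A = 0 := DFunLike.congr_fun hfg A
  have hB : f B * g B = 0 := DFunLike.congr_fun hfg B
  have hfg' := abs_add_mul_add_le_one (f.abs_apply_le_of_norm_le_one hf A)
    (f.abs_apply_le_of_norm_le_one hf B) (g.abs_apply_le_of_norm_le_one hg A)
    (g.abs_apply_le_of_norm_le_one hg B) hA hB
  have hα : |α y| ≤ ‖α‖ := α.norm_coe_le_norm y
  calc ‖(T f * T g) y‖ = |α y| ^ 2 / 4 * |(f A + f B) * (g A + g B)| := by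
        rw [ContinuousMap.mul_apply, hT, hT, Real.norm_eq_abs,
          show α y * (f A + f B) / 2 * (α y * (g A + g B) / 2)
            = α y ^ 2 / 4 * ((f A + f B) * (g A + g B)) by ring,
          abs_mul, abs_of_nonneg (by positivity : 0 ≤ α y ^ 2 / 4), sq_abs]
    _ ≤ ‖α‖ ^ 2 / 4 * 1 := by gcongr
    _ = ‖α‖ ^ 2 / 4 := mul_one _

lemma opNorm_eq_norm_of_average [Nonempty X] (hT : ∀ f y, T f y = α y * (f A + f B) / 2) :
    ‖T‖ = ‖α‖ := by
  refine le_antisymm (T.opNorm_le_bound (norm_nonneg α) fun f => ?_) ?_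
  · refine (ContinuousMap.norm_le _ (by positivity)).2 fun y => ?_
    have hsum : |f A + f B| ≤ 2 * ‖f‖ := by
      rw [two_mul]
      exact (abs_add_le _ _).trans (add_le_add (f.norm_coe_le_norm A) (f.norm_coe_le_norm B))
    calc ‖T f y‖ = |α y| * |f A + f B| / 2 := by
          rw [hT, Real.norm_eq_abs, abs_div, abs_mul, abs_two]
      _ ≤ ‖α‖ * (2 * ‖f‖) / 2 := by gcongr; exact α.norm_coe_le_norm y
      _ = ‖α‖ * ‖f‖ := by ring
  · have hT1 : T 1 = α := by ext y; simp [hT]; ring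
    simpa [hT1] using T.le_opNorm 1

lemma abs_apply_div_two_le_norm_sub (hT : ∀ f y, T f y = α y * (f A + f B) / 2)
    [T2Space X] (hAB : A ≠ B) {S : C(X, ℝ) →L[ℝ] C(Y, ℝ)} (hS : IsWCM S) (y : Y) :
    |α y| / 2 ≤ ‖T - S‖ := by
  obtain ⟨a, h, -, hS⟩ := hS
  obtain ⟨P, hPAB, hP⟩ : ∃ P, (P = A ∨ P = B) ∧ h y ≠ P := by
    by_cases hA : h y = A
    · exact ⟨B, Or.inr rfl, hA ▸ hAB⟩
    · exact ⟨A, Or.inl rfl, hA⟩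
  obtain ⟨f, hf0, hf1, hf⟩ := exists_continuousMap_zero_one_of_ne hP
  have hfnorm : ‖f‖ ≤ 1 := (ContinuousMap.norm_le _ zero_le_one).2 fun w => by
    rw [Real.norm_eq_abs, abs_le]; constructor <;> linarith [(hf w).1, (hf w).2]
  have hval : (T - S) f y = α y * (f A + f B) / 2 := by
    simp [hT, hS, hf0]
  have hsum : 1 ≤ f A + f B := by
    have hA := (hf A).1
    have hB := (hf B).1
    rcases hPAB with rfl | rfl <;> linarith
  calc |α y| / 2 ≤ |α y| * (f A + f B) / 2 := by
        gcongr; exact le_mul_of_one_le_right (abs_nonneg _) hsum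
    _ = |(T - S) f y| := by
        rw [hval, abs_div, abs_mul, abs_two, abs_of_nonneg (by linarith : 0 ≤ f A + f B)]
    _ ≤ ‖(T - S) f‖ := ((T - S) f).norm_coe_le_norm y
    _ ≤ ‖T - S‖ := (T - S).unit_le_opNorm f hfnorm

end Averaging

lemma ContinuousMap.norm_eq_of_mem_Icc_of_apply_eq {Y : Type*} [TopologicalSpace Y]
    [CompactSpace Y] {α : C(Y, ℝ)} {c : ℝ} (hα : ∀ y, α y ∈ Set.Icc 0 c) {y₀ : Y}
    (hα₀ : α y₀ = c) : ‖α‖ = c := by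
  refine le_antisymm ((α.norm_le (hα₀ ▸ (hα y₀).1)).2 fun y => ?_) ?_
  · rw [Real.norm_eq_abs, abs_of_nonneg (hα y).1]; exact (hα y).2
  · simpa [hα₀, abs_of_nonneg ((hα y₀).1.trans_eq hα₀)] using α.norm_coe_le_norm y₀

theorem stmt17_general {X Y : Type*}
    [TopologicalSpace X] [CompactSpace X] [T2Space X]
    [TopologicalSpace Y] [CompactSpace Y]
    (ε : ℝ) (hε : 0 < ε)
    (A B : X) (hAB : A ≠ B) (y₀ : Y)
    (α : C(Y, ℝ)) (hα : ∀ y : Y, α y ∈ Set.Icc 0 (2 * sqrt ε))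
    (hα₀ : α y₀ = 2 * sqrt ε)
    (T : C(X, ℝ) →L[ℝ] C(Y, ℝ))
    (hT : ∀ (f : C(X, ℝ)) (y : Y), T f y = α y * (f A + f B) / 2) :
    (∀ f g : C(X, ℝ), ‖f‖ = 1 → ‖g‖ = 1 → f * g = 0 → ‖T f * T g‖ ≤ ε) ∧
    ‖T‖ = 2 * sqrt ε ∧
    ∀ S : C(X, ℝ) →L[ℝ] C(Y, ℝ), IsWCM S → sqrt ε ≤ ‖T - S‖ := by
  have : Nonempty X := ⟨A⟩
  have hnorm : ‖α‖ = 2 * sqrt ε := α.norm_eq_of_mem_Icc_of_apply_eq hα hα₀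
  refine ⟨fun f g hf hg hfg => ?_, (opNorm_eq_norm_of_average hT).trans hnorm, fun S hS => ?_⟩
  · have := norm_mul_le_of_mul_eq_zero hT hf.le hg.le hfg
    rw [hnorm, mul_pow, sq_sqrt hε.le] at this
    linarith
  · have := abs_apply_div_two_le_norm_sub hT hAB hS y₀
    rw [hα₀, abs_of_nonneg (by positivity)] at this
    linarith

theorem stmt17 {X Y : Type*}
    [TopologicalSpace X] [CompactSpace X] [T2Space X]
    [TopologicalSpace Y] [CompactSpace Y] [T2Space Y]
    (ε : ℝ) (hε : 0 < ε) (hε' : ε < 1/4)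
    (A B : X) (hAB : A ≠ B) (y₀ : Y)
    (α : C(Y, ℝ)) (hα : ∀ y : Y, α y ∈ Set.Icc 0 (2 * sqrt ε))
    (hα₀ : α y₀ = 2 * sqrt ε)
    (T : C(X, ℝ) →L[ℝ] C(Y, ℝ))
    (hT : ∀ (f : C(X, ℝ)) (y : Y), T f y = α y * (f A + f B) / 2) :
    (∀ f g : C(X, ℝ), ‖f‖ = 1 → ‖g‖ = 1 → f * g = 0 → ‖T f * T g‖ ≤ ε) ∧
    ‖T‖ = 2 * sqrt ε ∧
    ∀ S : C(X, ℝ) →L[ℝ] C(Y, ℝ), IsWCM S → sqrt ε ≤ ‖T - S‖ :=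
  stmt17_general ε hε A B hAB y₀ α hα hα₀ T hT
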